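/- Let n ≥ 2 and let B ⊆ (ZMod n)^n be a set of exactly n² vectors with the plane code property. Then for every v ∈ B, there are exactly n - 1 vectors w ∈ B with w ≠ v such that the difference v - w has no coordinate equal to 0. -/

import Mathlib

/-!
Fix a coordinate `i`. Two codewords agreeing at `i` differ at every other coordinate `j`,
so each fibre `{w ∈ B | w i = a}` injects into `ZMod n` via `w ↦ w j` and has at most `n`
elements; as the `n` fibres partition the `n²` codewords, each has exactly `n`. Hence every
`v ∈ B` agrees at coordinate `i` with exactly `n - 1` other codewords, and summing over `i`,
the agreements of `v` with the other codewords total `n (n - 1)`. Each of the `n² - 1` other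
codewords agrees with `v` at most once, so exactly `n² - 1 - n (n - 1) = n - 1` of them
never agree with `v`.
-/

/-- The number of coordinates where two vectors in `(ZMod n)^n` agree,
i.e. the number of coordinates of `b - b'` equal to `0`. -/
def agreeCount {n : ℕ} (b b' : Fin n → ZMod n) : ℕ :=
  (Finset.univ.filter fun i => b i - b' i = 0).card

/-- `B` has the plane code property: any two distinct elements of `B`
agree in at most one coordinate. -/
def PlaneCode {n : ℕ} (B : Finset (Fin n → ZMod n)) : Prop :=
  ∀ b ∈ B, ∀ b' ∈ B, b ≠ b' → agreeCount b b' ≤ 1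

open Finset

theorem Finset.card_filter_eq_zero_add_sum_of_le_one {ι : Type*} (s : Finset ι) (f : ι → ℕ)
    (hf : ∀ x ∈ s, f x ≤ 1) : #(s.filter (f · = 0)) + ∑ x ∈ s, f x = #s := by
  have hsum : ∑ x ∈ s, f x = #(s.filter (¬ f · = 0)) := by
    rw [card_filter]
    exact sum_congr rfl fun x hx => by have := hf x hx; split_ifs <;> omega
  rw [hsum, card_filter_add_card_filter_not]

theorem agreeCount_eq_card_filter_eq {n : ℕ} (b b' : Fin n → ZMod n) :
    agreeCount b b' = #(univ.filter fun i => b i = b' i) := by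
  simp only [agreeCount, sub_eq_zero]

theorem two_le_agreeCount {n : ℕ} {b b' : Fin n → ZMod n} {i j : Fin n} (hij : i ≠ j)
    (hi : b i = b' i) (hj : b j = b' j) : 2 ≤ agreeCount b b' := by
  rw [agreeCount_eq_card_filter_eq, ← card_pair hij]
  exact card_le_card (by simp [insert_subset_iff, hi, hj])

namespace PlaneCode

variable {n : ℕ} {B : Finset (Fin n → ZMod n)}

theorem injOn_apply_filter_apply_eq (hB : PlaneCode B) {i j : Fin n} (hij : i ≠ j) (a : ZMod n) :
    Set.InjOn (fun w => w j) (B.filter (· i = a) : Set (Fin n → ZMod n)) := by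
  intro w hw w' hw' hww'
  simp only [mem_coe, mem_filter] at hw hw'
  by_contra hne
  have hle := hB w hw.1 w' hw'.1 hne
  have hge := two_le_agreeCount hij (hw.2.trans hw'.2.symm) hww'
  omega

theorem card_filter_apply_eq_le (hB : PlaneCode B) (hn : 2 ≤ n) (i : Fin n) (a : ZMod n) :
    #(B.filter (· i = a)) ≤ n := by
  have : NeZero n := ⟨by omega⟩
  have : Nontrivial (Fin n) := Fin.nontrivial_iff_two_le.2 hn
  obtain ⟨j, hji⟩ := exists_ne i
  calc #(B.filter (· i = a)) ≤ #(univ : Finset (ZMod n)) :=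
        card_le_card_of_injOn _ (fun _ _ => mem_coe.2 (mem_univ _))
          (hB.injOn_apply_filter_apply_eq hji.symm a)
    _ = n := by rw [card_univ, ZMod.card]

theorem card_filter_apply_eq (hB : PlaneCode B) (hn : 2 ≤ n) (hcard : #B = n ^ 2)
    (i : Fin n) (a : ZMod n) : #(B.filter (· i = a)) = n := by
  have : NeZero n := ⟨by omega⟩
  have hsum : ∑ a : ZMod n, #(B.filter (· i = a)) = ∑ _a : ZMod n, n := by
    rw [← card_eq_sum_card_fiberwise (fun _ _ => mem_univ _), hcard, sum_const, card_univ,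
      ZMod.card, smul_eq_mul, sq]
  exact (sum_eq_sum_iff_of_le fun a _ => hB.card_filter_apply_eq_le hn i a).1 hsum a (mem_univ a)

theorem sum_agreeCount_erase (hB : PlaneCode B) (hn : 2 ≤ n) (hcard : #B = n ^ 2)
    {v : Fin n → ZMod n} (hv : v ∈ B) :
    ∑ w ∈ B.erase v, agreeCount v w = n * (n - 1) := by
  have hfiber (i : Fin n) : #((B.erase v).filter fun w => v i = w i) = n - 1 := by
    rw [filter_erase, card_erase_of_mem (by simp [hv]), filter_congr fun _ _ => eq_comm,
      hB.card_filter_apply_eq hn hcard i (v i)]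
  calc ∑ w ∈ B.erase v, agreeCount v w
      = ∑ i, #((B.erase v).filter fun w => v i = w i) := by
        simp only [agreeCount_eq_card_filter_eq, card_filter]
        exact sum_comm
    _ = n * (n - 1) := by simp [hfiber]

end PlaneCode

theorem plane_code_parallel_count (n : ℕ) (hn : 2 ≤ n)
    (B : Finset (Fin n → ZMod n)) (hcard : B.card = n ^ 2) (hB : PlaneCode B)
    (v : Fin n → ZMod n) (hv : v ∈ B) :
    (B.filter fun w => w ≠ v ∧ agreeCount v w = 0).card = n - 1 := by
  have hcount := (B.erase v).card_filter_eq_zero_add_sum_of_le_one (agreeCount v)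
    fun w hw => hB v hv w (mem_of_mem_erase hw) (ne_of_mem_erase hw).symm
  rw [hB.sum_agreeCount_erase hn hcard hv, card_erase_of_mem hv, hcard] at hcount
  have hfilter : (B.filter fun w => w ≠ v ∧ agreeCount v w = 0)
      = (B.erase v).filter (agreeCount v · = 0) := by
    ext w
    simp only [mem_filter, mem_erase]
    tauto
  obtain ⟨m, rfl⟩ : ∃ m, n = m + 1 := ⟨n - 1, by omega⟩
  have hsq : (m + 1) ^ 2 = m + (m + 1) * m + 1 := by ring
  rw [hfilter, Nat.add_sub_cancel]
  rw [Nat.add_sub_cancel, hsq] at hcount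
  omega
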